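/- arXiv:0804.2490 — 4 statements merged into one kernel-verified Lean document; each statement's English description precedes it below -/
import Mathlib

section
/- Let n ≥ 1 and let φ : ℝⁿ × ℝⁿ × ℝ → ℝⁿ × ℝⁿ × ℝ be a smooth (C^∞) diffeomorphism which is a contact transformation of the Heisenberg group, i.e. for every point p and every tangent vector v with θ_p(v) = 0 one has θ_{φ(p)}(Dφ_p(v)) = 0. Suppose moreover that φ(0) = 0 and Dφ_0 = id. Then for every vector v = (u, v', 0) with θ_0(v) = 0, the second derivative D²φ_0(v, v) again satisfies θ_0(D²φ_0(v,v)) = 0; that is, the last (t-)component of D²φ_0(v,v) vanishes. -/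
/-- The Heisenberg group of dimension `2n+1`, as the space `ℝⁿ × ℝⁿ × ℝ`. -/
abbrev HeisPt (n : ℕ) := (Fin n → ℝ) × (Fin n → ℝ) × ℝ

/-- The canonical contact form of the Heisenberg group:
`θ_{(x,y,t)}(u,v,w) = w + ½ ∑ (x_j v_j − y_j u_j)`. -/
noncomputable def heisTheta (n : ℕ) (p v : HeisPt n) : ℝ :=
  v.2.2 + (1 / 2) * ∑ j : Fin n, (p.1 j * v.2.1 j - p.2.1 j * v.1 j)

/-- For a smooth contact transformation `φ` of the Heisenberg group with `φ(0) = 0` and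
`Dφ₀ = id`, the second derivative `D²φ₀(v,v)` lies in the contact hyperplane at `0`
whenever `v` does. -/
theorem secondDeriv_of_contact_transformation (n : ℕ) (hn : 1 ≤ n)
    (φ ψ : HeisPt n → HeisPt n)
    (hφ : ContDiff ℝ (⊤ : ℕ∞) φ) (hψ : ContDiff ℝ (⊤ : ℕ∞) ψ)
    (hleft : Function.LeftInverse ψ φ) (hright : Function.RightInverse ψ φ)
    (hcontact : ∀ p v : HeisPt n, heisTheta n p v = 0 →
      heisTheta n (φ p) (fderiv ℝ φ p v) = 0)
    (h0 : φ 0 = 0)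
    (hD : fderiv ℝ φ 0 = ContinuousLinearMap.id ℝ (HeisPt n)) :
    ∀ v : HeisPt n, heisTheta n 0 v = 0 →
      heisTheta n 0 (iteratedFDeriv ℝ 2 φ 0 ![v, v]) = 0 := by
  intro v hv
  have hv2 : v.2.2 = 0 := by simpa [heisTheta] using hv
  have hφd : Differentiable ℝ φ := hφ.differentiable (by simp)
  have hf' : ContDiff ℝ (⊤ : ℕ∞) (fderiv ℝ φ) := hφ.fderiv_right (le_of_eq rfl)
  set f'' := fderiv ℝ (fderiv ℝ φ) 0 with hf''def
  -- the curve s ↦ s • v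
  have hcurve : HasDerivAt (fun s : ℝ => s • v) v 0 := by
    simpa using (hasDerivAt_id (0 : ℝ)).smul_const v
  have hzero : (0 : ℝ) • v = 0 := zero_smul _ _
  -- derivative of s ↦ Dφ_{s•v}
  have hA : HasDerivAt (fun s : ℝ => fderiv ℝ φ (s • v)) (f'' v) 0 := by
    have h1 : HasFDerivAt (fderiv ℝ φ) f'' ((0 : ℝ) • v) := by
      rw [hzero]; exact ((hf'.differentiable (by simp)) 0).hasFDerivAt
    simpa [Function.comp_def] using h1.comp_hasDerivAt 0 hcurve
  -- derivative of B s := Dφ_{s•v} v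
  have hB : HasDerivAt (fun s : ℝ => fderiv ℝ φ (s • v) v) (f'' v v) 0 := by
    have := (ContinuousLinearMap.apply ℝ (HeisPt n) v).hasFDerivAt.comp_hasDerivAt 0 hA
    simpa [Function.comp_def] using this
  have hB0 : fderiv ℝ φ ((0 : ℝ) • v) v = v := by rw [hzero, hD]; rfl
  -- derivative of c s := φ (s • v)
  have hc : HasDerivAt (fun s : ℝ => φ (s • v)) v 0 := by
    have h1 : HasFDerivAt φ (fderiv ℝ φ 0) ((0 : ℝ) • v) := by
      rw [hzero]; exact (hφd 0).hasFDerivAt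
    have := h1.comp_hasDerivAt 0 hcurve
    simpa [hD, Function.comp_def] using this
  have hc0 : φ ((0 : ℝ) • v) = 0 := by rw [hzero, h0]
  -- componentwise derivatives
  have hB3 : HasDerivAt (fun s : ℝ => (fderiv ℝ φ (s • v) v).2.2) ((f'' v v).2.2) 0 := by
    have := ((ContinuousLinearMap.snd ℝ (Fin n → ℝ) ℝ).comp
      (ContinuousLinearMap.snd ℝ (Fin n → ℝ) ((Fin n → ℝ) × ℝ))).hasFDerivAt.comp_hasDerivAt 0 hB
    simpa [Function.comp_def] using this
  have hB1 : ∀ j : Fin n, HasDerivAt (fun s : ℝ => (fderiv ℝ φ (s • v) v).1 j)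
      ((f'' v v).1 j) 0 := fun j => by
    have := ((ContinuousLinearMap.proj j : (Fin n → ℝ) →L[ℝ] ℝ).comp
      (ContinuousLinearMap.fst ℝ (Fin n → ℝ) ((Fin n → ℝ) × ℝ))).hasFDerivAt.comp_hasDerivAt 0 hB
    simpa [Function.comp_def] using this
  have hB21 : ∀ j : Fin n, HasDerivAt (fun s : ℝ => (fderiv ℝ φ (s • v) v).2.1 j)
      ((f'' v v).2.1 j) 0 := fun j => by
    have := (((ContinuousLinearMap.proj j : (Fin n → ℝ) →L[ℝ] ℝ).comp
      (ContinuousLinearMap.fst ℝ (Fin n → ℝ) ℝ)).comp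
      (ContinuousLinearMap.snd ℝ (Fin n → ℝ) ((Fin n → ℝ) × ℝ))).hasFDerivAt.comp_hasDerivAt 0 hB
    simpa [Function.comp_def] using this
  have hc1 : ∀ j : Fin n, HasDerivAt (fun s : ℝ => (φ (s • v)).1 j) (v.1 j) 0 := fun j => by
    have := ((ContinuousLinearMap.proj j : (Fin n → ℝ) →L[ℝ] ℝ).comp
      (ContinuousLinearMap.fst ℝ (Fin n → ℝ) ((Fin n → ℝ) × ℝ))).hasFDerivAt.comp_hasDerivAt 0 hc
    simpa [Function.comp_def] using this
  have hc21 : ∀ j : Fin n, HasDerivAt (fun s : ℝ => (φ (s • v)).2.1 j) (v.2.1 j) 0 := fun j => by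
    have := (((ContinuousLinearMap.proj j : (Fin n → ℝ) →L[ℝ] ℝ).comp
      (ContinuousLinearMap.fst ℝ (Fin n → ℝ) ℝ)).comp
      (ContinuousLinearMap.snd ℝ (Fin n → ℝ) ((Fin n → ℝ) × ℝ))).hasFDerivAt.comp_hasDerivAt 0 hc
    simpa [Function.comp_def] using this
  -- derivative of each summand
  have hterm : ∀ j : Fin n, HasDerivAt
      (fun s : ℝ => (φ (s • v)).1 j * (fderiv ℝ φ (s • v) v).2.1 j
        - (φ (s • v)).2.1 j * (fderiv ℝ φ (s • v) v).1 j)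
      (v.1 j * v.2.1 j - v.2.1 j * v.1 j) 0 := fun j => by
    have h1 := ((hc1 j).mul (hB21 j)).sub ((hc21 j).mul (hB1 j))
    have e1 : (φ ((0:ℝ) • v)).1 j = 0 := by rw [hc0]; rfl
    have e2 : (φ ((0:ℝ) • v)).2.1 j = 0 := by rw [hc0]; rfl
    have e3 : (fderiv ℝ φ ((0:ℝ) • v) v).2.1 j = v.2.1 j := by rw [hB0]
    have e4 : (fderiv ℝ φ ((0:ℝ) • v) v).1 j = v.1 j := by rw [hB0]
    rw [e1, e2, e3, e4] at h1
    simpa [Pi.mul_def, Pi.sub_def] using h1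
  -- the full function g
  have hg : HasDerivAt
      (fun s : ℝ => (fderiv ℝ φ (s • v) v).2.2
        + (1 / 2) * ∑ j : Fin n, ((φ (s • v)).1 j * (fderiv ℝ φ (s • v) v).2.1 j
            - (φ (s • v)).2.1 j * (fderiv ℝ φ (s • v) v).1 j))
      ((f'' v v).2.2 + (1 / 2) * ∑ j : Fin n, (v.1 j * v.2.1 j - v.2.1 j * v.1 j)) 0 :=
    hB3.add ((HasDerivAt.fun_sum fun j _ => hterm j).const_mul (1 / 2))
  -- g is identically zero
  have hgzero : (fun s : ℝ => (fderiv ℝ φ (s • v) v).2.2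
        + (1 / 2) * ∑ j : Fin n, ((φ (s • v)).1 j * (fderiv ℝ φ (s • v) v).2.1 j
            - (φ (s • v)).2.1 j * (fderiv ℝ φ (s • v) v).1 j)) = fun _ => (0 : ℝ) := by
    funext s
    have hθ : heisTheta n (s • v) v = 0 := by
      simp only [heisTheta, Prod.smul_fst, Prod.smul_snd, Pi.smul_apply, smul_eq_mul, hv2]
      rw [Finset.sum_eq_zero fun j _ => by ring]
      ring
    simpa [heisTheta] using hcontact (s • v) v hθ
  rw [hgzero] at hg
  have hD0 : (f'' v v).2.2 + (1 / 2) * ∑ j : Fin n, (v.1 j * v.2.1 j - v.2.1 j * v.1 j) = 0 :=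
    hg.unique (hasDerivAt_const 0 0)
  have hsum0 : ∑ j : Fin n, (v.1 j * v.2.1 j - v.2.1 j * v.1 j) = 0 :=
    Finset.sum_eq_zero fun j _ => by ring
  have hkey : (f'' v v).2.2 = 0 := by rw [hsum0] at hD0; linarith
  have h2 : iteratedFDeriv ℝ 2 φ 0 ![v, v] = f'' v v := by
    rw [iteratedFDeriv_two_apply]; rfl
  simp only [heisTheta, h2]
  rw [hkey, Finset.sum_eq_zero fun j _ => by simp]
  ring
end

section
/- Let n ≥ 1 and let φ : ℝⁿ × ℝⁿ × ℝ → ℝⁿ × ℝⁿ × ℝ be a smooth (C^∞) diffeomorphism which is a contact transformation of the Heisenberg group (for every point p and every tangent vector v with θ_p(v) = 0 one has θ_{φ(p)}(Dφ_p(v)) = 0), with φ(0) = 0 and Dφ_0 = id. Then for every fixed g ∈ ℝⁿ × ℝⁿ × ℝ, the function s ↦ δ_{s}^{-1}(φ(δ_s(g))) − g is O(s) as s → 0⁺; here δ_s(x, y, t) = (s·x, s·y, s²·t) and δ_s^{-1} = δ_{1/s} for s > 0. -/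
open Filter Asymptotics

/-- The parabolic dilations `δ_s(x,y,t) = (s·x, s·y, s²·t)`. -/
noncomputable def heisDilation (n : ℕ) (s : ℝ) (p : HeisPt n) : HeisPt n :=
  (s • p.1, s • p.2.1, s ^ 2 * p.2.2)

lemma bigO_step {F : Type*} [NormedAddCommGroup F] [NormedSpace ℝ F] {h d : ℝ → F}
    (hd : ∀ s, HasDerivAt h (d s) s) (h0 : h 0 = 0) (k : ℕ)
    (hO : d =O[nhds (0:ℝ)] fun s => s ^ k) :
    h =O[nhds (0:ℝ)] fun s => s ^ (k + 1) := by
  rw [isBigO_iff] at hO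
  obtain ⟨C, hC⟩ := hO
  rw [Metric.eventually_nhds_iff] at hC
  obtain ⟨ε, hε, hB⟩ := hC
  rw [isBigO_iff]
  refine ⟨|C|, Metric.eventually_nhds_iff.mpr ⟨ε, hε, fun s hs => ?_⟩⟩
  have hsε : |s| < ε := by simpa [Real.dist_eq] using hs
  have key := Convex.norm_image_sub_le_of_norm_hasDerivWithin_le
      (f := h) (f' := d) (s := Metric.closedBall (0:ℝ) |s|) (C := |C| * |s| ^ k)
      (fun x _ => (hd x).hasDerivWithinAt)
      (fun x hx => ?_) (convex_closedBall _ _)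
      (by simp : (0:ℝ) ∈ Metric.closedBall (0:ℝ) |s|)
      (by simp [Real.dist_eq] : s ∈ Metric.closedBall (0:ℝ) |s|)
  · rw [h0, sub_zero, sub_zero] at key
    calc ‖h s‖ ≤ |C| * |s| ^ k * ‖s‖ := key
      _ = |C| * ‖s ^ (k + 1)‖ := by
          rw [Real.norm_eq_abs, Real.norm_eq_abs, abs_pow, pow_succ]; ring
  · have hxs : |x| ≤ |s| := by simpa [Real.dist_eq] using hx
    have hxε : dist x 0 < ε := by
      simp only [Real.dist_eq, sub_zero]; exact lt_of_le_of_lt hxs hsε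
    calc ‖d x‖ ≤ C * ‖x ^ k‖ := hB hxε
      _ ≤ |C| * |x| ^ k := by
          rw [Real.norm_eq_abs, abs_pow]
          exact mul_le_mul_of_nonneg_right (le_abs_self C) (by positivity)
      _ ≤ |C| * |s| ^ k :=
          mul_le_mul_of_nonneg_left (pow_le_pow_left₀ (abs_nonneg x) hxs k) (abs_nonneg C)

lemma contact_key (n : ℕ) (φ : HeisPt n → HeisPt n) (hφ : ContDiff ℝ (⊤ : ℕ∞) φ)
    (hcontact : ∀ p v : HeisPt n, heisTheta n p v = 0 →
      heisTheta n (φ p) (fderiv ℝ φ p v) = 0)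
    (h0 : φ 0 = 0)
    (hD : fderiv ℝ φ 0 = ContinuousLinearMap.id ℝ (HeisPt n))
    (a b : Fin n → ℝ) :
    ((fderiv ℝ (fderiv ℝ φ) 0) (a, b, (0:ℝ)) (a, b, (0:ℝ))).2.2 = 0 := by
  set h : HeisPt n := (a, b, (0:ℝ)) with hh
  set D := fderiv ℝ (fderiv ℝ φ) 0 with hDdef
  have hφd : Differentiable ℝ φ := hφ.differentiable (by simp)
  have hcC : ContDiff ℝ (⊤ : ℕ∞) (fderiv ℝ φ) := hφ.fderiv_right (by simp)
  have hcd : Differentiable ℝ (fderiv ℝ φ) := hcC.differentiable (by simp)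
  have hline0 : HasDerivAt (fun u : ℝ => u • h) h 0 := by
    simpa using (hasDerivAt_id (0:ℝ)).smul_const h
  have hcomp : HasDerivAt (fun s : ℝ => fderiv ℝ φ (s • h)) (D h) 0 := by
    have := (hcd 0).hasFDerivAt.comp_hasDerivAt_of_eq 0 hline0 (by simp)
    simpa [Function.comp_def] using this
  have hA : HasDerivAt (fun s : ℝ => fderiv ℝ φ (s • h) h) (D h h) 0 := by
    have := hcomp.clm_apply (hasDerivAt_const (0:ℝ) h)
    simpa using this
  have hP : HasDerivAt (fun s : ℝ => φ (s • h)) h 0 := by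
    have := (hφd 0).hasFDerivAt.comp_hasDerivAt_of_eq 0 hline0 (by simp)
    rw [hD] at this
    simpa [Function.comp_def] using this
  let π1 : Fin n → (HeisPt n →L[ℝ] ℝ) := fun j =>
    (ContinuousLinearMap.proj j).comp (ContinuousLinearMap.fst ℝ (Fin n → ℝ) ((Fin n → ℝ) × ℝ))
  let π2 : Fin n → (HeisPt n →L[ℝ] ℝ) := fun j =>
    (ContinuousLinearMap.proj j).comp ((ContinuousLinearMap.fst ℝ (Fin n → ℝ) ℝ).comp
      (ContinuousLinearMap.snd ℝ (Fin n → ℝ) ((Fin n → ℝ) × ℝ)))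
  let π3 : HeisPt n →L[ℝ] ℝ :=
    (ContinuousLinearMap.snd ℝ (Fin n → ℝ) ℝ).comp
      (ContinuousLinearMap.snd ℝ (Fin n → ℝ) ((Fin n → ℝ) × ℝ))
  have hA1 : ∀ j, HasDerivAt (fun s : ℝ => (fderiv ℝ φ (s • h) h).1 j) ((D h h).1 j) 0 :=
    fun j => by simpa [Function.comp_def, π1] using (π1 j).hasFDerivAt.comp_hasDerivAt 0 hA
  have hA2 : ∀ j, HasDerivAt (fun s : ℝ => (fderiv ℝ φ (s • h) h).2.1 j) ((D h h).2.1 j) 0 :=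
    fun j => by simpa [Function.comp_def, π2] using (π2 j).hasFDerivAt.comp_hasDerivAt 0 hA
  have hA3 : HasDerivAt (fun s : ℝ => (fderiv ℝ φ (s • h) h).2.2) ((D h h).2.2) 0 := by
    simpa [Function.comp_def, π3] using π3.hasFDerivAt.comp_hasDerivAt 0 hA
  have hP1 : ∀ j, HasDerivAt (fun s : ℝ => (φ (s • h)).1 j) (h.1 j) 0 :=
    fun j => by simpa [Function.comp_def, π1] using (π1 j).hasFDerivAt.comp_hasDerivAt 0 hP
  have hP2 : ∀ j, HasDerivAt (fun s : ℝ => (φ (s • h)).2.1 j) (h.2.1 j) 0 :=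
    fun j => by simpa [Function.comp_def, π2] using (π2 j).hasFDerivAt.comp_hasDerivAt 0 hP
  have hhoriz : ∀ s : ℝ, heisTheta n (s • h) h = 0 := by
    intro s
    simp only [heisTheta, hh, Prod.smul_fst, Prod.smul_snd, Pi.smul_apply, smul_eq_mul]
    rw [Finset.sum_eq_zero (fun j _ => by ring)]
    ring
  have hGl0 : ∀ s : ℝ, (fderiv ℝ φ (s • h) h).2.2 + (1 / 2) *
      ∑ j : Fin n, ((φ (s • h)).1 j * (fderiv ℝ φ (s • h) h).2.1 j
        - (φ (s • h)).2.1 j * (fderiv ℝ φ (s • h) h).1 j) = 0 := by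
    intro s
    have := hcontact (s • h) h (hhoriz s)
    simpa [heisTheta] using this
  have hsum : HasDerivAt (fun s : ℝ => ∑ j : Fin n, ((φ (s • h)).1 j * (fderiv ℝ φ (s • h) h).2.1 j
        - (φ (s • h)).2.1 j * (fderiv ℝ φ (s • h) h).1 j))
      (∑ j : Fin n, ((h.1 j * (fderiv ℝ φ ((0:ℝ) • h) h).2.1 j
          + (φ ((0:ℝ) • h)).1 j * (D h h).2.1 j)
        - (h.2.1 j * (fderiv ℝ φ ((0:ℝ) • h) h).1 j
          + (φ ((0:ℝ) • h)).2.1 j * (D h h).1 j))) 0 :=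
    HasDerivAt.fun_sum (fun j _ => ((hP1 j).mul (hA2 j)).sub ((hP2 j).mul (hA1 j)))
  have hGd := hA3.add ((hsum.const_mul ((1:ℝ)/2)))
  have hGlz : (fun s : ℝ => (fderiv ℝ φ (s • h) h).2.2 + (1 / 2) *
      ∑ j : Fin n, ((φ (s • h)).1 j * (fderiv ℝ φ (s • h) h).2.1 j
        - (φ (s • h)).2.1 j * (fderiv ℝ φ (s • h) h).1 j)) = fun _ => (0:ℝ) :=
    funext hGl0
  change HasDerivAt (fun s : ℝ => (fderiv ℝ φ (s • h) h).2.2 + (1 / 2) *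
      ∑ j : Fin n, ((φ (s • h)).1 j * (fderiv ℝ φ (s • h) h).2.1 j
        - (φ (s • h)).2.1 j * (fderiv ℝ φ (s • h) h).1 j)) _ 0 at hGd
  rw [hGlz] at hGd
  have hval := hGd.unique (hasDerivAt_const 0 0)
  have e0 : (0:ℝ) • h = 0 := zero_smul _ _
  rw [e0, h0, hD] at hval
  simp only [ContinuousLinearMap.id_apply, hh] at hval
  rw [Finset.sum_congr rfl (fun j _ => by simp; ring :
    ∀ j ∈ Finset.univ, ((a, b, (0:ℝ)).1 j * (a, b, (0:ℝ)).2.1 j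
      + (0 : HeisPt n).1 j * (D h h).2.1 j)
      - ((a, b, (0:ℝ)).2.1 j * (a, b, (0:ℝ)).1 j
        + (0 : HeisPt n).2.1 j * (D h h).1 j) = 0)] at hval
  simpa using hval

/-- For a smooth contact transformation `φ` of the Heisenberg group with `φ(0) = 0` and
`Dφ₀ = id`, and any fixed `g`, one has `δ_s⁻¹(φ(δ_s g)) = g + O(s)` as `s → 0⁺`. -/
theorem dilated_contact_transformation_isBigO (n : ℕ) (hn : 1 ≤ n)
    (φ ψ : HeisPt n → HeisPt n)
    (hφ : ContDiff ℝ (⊤ : ℕ∞) φ) (hψ : ContDiff ℝ (⊤ : ℕ∞) ψ)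
    (hleft : Function.LeftInverse ψ φ) (hright : Function.RightInverse ψ φ)
    (hcontact : ∀ p v : HeisPt n, heisTheta n p v = 0 →
      heisTheta n (φ p) (fderiv ℝ φ p v) = 0)
    (h0 : φ 0 = 0)
    (hD : fderiv ℝ φ 0 = ContinuousLinearMap.id ℝ (HeisPt n))
    (g : HeisPt n) :
    (fun s : ℝ => heisDilation n s⁻¹ (φ (heisDilation n s g)) - g)
      =O[nhdsWithin 0 (Set.Ioi 0)] (fun s : ℝ => s) := by
  have hφd : Differentiable ℝ φ := hφ.differentiable (by simp)
  have hcC : ContDiff ℝ (⊤ : ℕ∞) (fderiv ℝ φ) := hφ.fderiv_right (by simp)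
  have hcd : Differentiable ℝ (fderiv ℝ φ) := hcC.differentiable (by simp)
  have hc2C : ContDiff ℝ (⊤ : ℕ∞) (fderiv ℝ (fderiv ℝ φ)) := hcC.fderiv_right (by simp)
  have hc2d : Differentiable ℝ (fderiv ℝ (fderiv ℝ φ)) := hc2C.differentiable (by simp)
  set γ : ℝ → HeisPt n := fun s => heisDilation n s g with hγdef
  set γd : ℝ → HeisPt n := fun s => (g.1, g.2.1, 2 * s * g.2.2) with hγddef
  set vv : HeisPt n := (0, 0, 2 * g.2.2) with hvvdef
  have hγ : ∀ s, HasDerivAt γ (γd s) s := by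
    intro s
    have h1 : HasDerivAt (fun s : ℝ => s • g.1) g.1 s := by
      simpa using (hasDerivAt_id s).smul_const g.1
    have h2 : HasDerivAt (fun s : ℝ => s • g.2.1) g.2.1 s := by
      simpa using (hasDerivAt_id s).smul_const g.2.1
    have h3 : HasDerivAt (fun s : ℝ => s ^ 2 * g.2.2) (2 * s * g.2.2) s := by
      have := (hasDerivAt_pow 2 s).mul_const g.2.2
      simpa using this
    exact h1.prodMk (h2.prodMk h3)
  have hγdd : ∀ s, HasDerivAt γd vv s := by
    intro s
    have h3 : HasDerivAt (fun s : ℝ => 2 * s * g.2.2) (2 * g.2.2) s := by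
      have := (HasDerivAt.const_mul (2:ℝ) (hasDerivAt_id s)).mul_const g.2.2
      simpa using this
    exact (hasDerivAt_const s g.1).prodMk ((hasDerivAt_const s g.2.1).prodMk h3)
  have hγ0 : γ 0 = 0 := by
    simp [hγdef, heisDilation, Prod.ext_iff]
  have hγd0 : γd 0 = (g.1, g.2.1, (0:ℝ)) := by
    simp [hγddef]
  set R : ℝ → HeisPt n := fun s => φ (γ s) - γ s with hRdef
  set Rd : ℝ → HeisPt n := fun s => fderiv ℝ φ (γ s) (γd s) - γd s with hRddef
  let π3 : HeisPt n →L[ℝ] ℝ :=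
    (ContinuousLinearMap.snd ℝ (Fin n → ℝ) ℝ).comp
      (ContinuousLinearMap.snd ℝ (Fin n → ℝ) ((Fin n → ℝ) × ℝ))
  have hφγ : ∀ s, HasDerivAt (fun s => φ (γ s)) (fderiv ℝ φ (γ s) (γd s)) s := fun s => by
    simpa [Function.comp_def] using (hφd (γ s)).hasFDerivAt.comp_hasDerivAt s (hγ s)
  have hRder : ∀ s, HasDerivAt R (Rd s) s := fun s => (hφγ s).sub (hγ s)
  have hR0 : R 0 = 0 := by simp [hRdef, hγ0, h0]
  have hRd0 : Rd 0 = 0 := by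
    rw [hRddef]
    simp only [hγ0, hD, ContinuousLinearMap.id_apply, sub_self]
  have hcγ : ∀ s, HasDerivAt (fun s => fderiv ℝ φ (γ s))
      ((fderiv ℝ (fderiv ℝ φ) (γ s)) (γd s)) s := fun s => by
    simpa [Function.comp_def] using (hcd (γ s)).hasFDerivAt.comp_hasDerivAt s (hγ s)
  have hRdder : ∀ s, HasDerivAt Rd
      ((fderiv ℝ (fderiv ℝ φ) (γ s)) (γd s) (γd s) + fderiv ℝ φ (γ s) vv - vv) s := fun s =>
    ((hcγ s).clm_apply (hγdd s)).sub (hγdd s)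
  have hrder : ∀ s, HasDerivAt (fun s => (R s).2.2) ((Rd s).2.2) s := fun s => by
    simpa [Function.comp_def, π3] using π3.hasFDerivAt.comp_hasDerivAt s (hRder s)
  set d2 : ℝ → ℝ := fun s => ((fderiv ℝ (fderiv ℝ φ) (γ s)) (γd s) (γd s)).2.2
      + (fderiv ℝ φ (γ s) vv).2.2 - 2 * g.2.2 with hd2def
  have hd2der : ∀ s, HasDerivAt (fun s => (Rd s).2.2) (d2 s) s := fun s => by
    have := π3.hasFDerivAt.comp_hasDerivAt s (hRdder s)
    simpa [Function.comp_def, π3, hvvdef] using this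
  have hkey := contact_key n φ hφ hcontact h0 hD g.1 g.2.1
  have hd20 : d2 0 = 0 := by
    have e : d2 0 = ((fderiv ℝ (fderiv ℝ φ) 0) (g.1, g.2.1, (0:ℝ)) (g.1, g.2.1, (0:ℝ))).2.2
        + (fderiv ℝ φ 0 vv).2.2 - 2 * g.2.2 := by
      rw [hd2def]
      simp [hγ0, hγd0]
    rw [e, hkey, hD]
    simp [hvvdef]
  have hd2diff : DifferentiableAt ℝ d2 0 := by
    have dγ : DifferentiableAt ℝ γ 0 := (hγ 0).differentiableAt
    have dγd : DifferentiableAt ℝ γd 0 := (hγdd 0).differentiableAt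
    have d1 : DifferentiableAt ℝ (fun s => fderiv ℝ (fderiv ℝ φ) (γ s)) 0 :=
      by have := DifferentiableAt.comp (F := HeisPt n) (G := HeisPt n →L[ℝ] HeisPt n →L[ℝ] HeisPt n) 0 (hc2d (γ 0)) dγ; exact this
    have d2a : DifferentiableAt ℝ (fun s => (fderiv ℝ (fderiv ℝ φ) (γ s)) (γd s) (γd s)) 0 :=
      (d1.clm_apply dγd).clm_apply dγd
    have d2b : DifferentiableAt ℝ (fun s => fderiv ℝ φ (γ s) vv) 0 :=
      ((hcd (γ 0)).comp 0 dγ).clm_apply (differentiableAt_const vv)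
    exact ((d2a.snd.snd).add (d2b.snd.snd)).sub (differentiableAt_const _)
  have hd2O : d2 =O[nhds (0:ℝ)] fun s => s ^ 1 := by
    have := hd2diff.isBigO_sub
    simpa [hd20] using this
  have hr1O : (fun s => (Rd s).2.2) =O[nhds (0:ℝ)] fun s => s ^ 2 :=
    bigO_step hd2der (by rw [hRd0]; rfl) 1 hd2O
  have hrO : (fun s => (R s).2.2) =O[nhds (0:ℝ)] fun s => s ^ 3 :=
    bigO_step hrder (by rw [hR0]; rfl) 2 hr1O
  have hRdO : Rd =O[nhds (0:ℝ)] fun s => s ^ 1 := by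
    have := (hRdder 0).differentiableAt.isBigO_sub
    simpa [hRd0] using this
  have hRO : R =O[nhds (0:ℝ)] fun s => s ^ 2 :=
    bigO_step hRder hR0 1 hRdO
  -- assembly
  rw [isBigO_iff] at hRO hrO ⊢
  obtain ⟨C₁, hC₁⟩ := hRO
  obtain ⟨C₂, hC₂⟩ := hrO
  refine ⟨|C₁| + |C₂|, ?_⟩
  filter_upwards [nhdsWithin_le_nhds hC₁, nhdsWithin_le_nhds hC₂, self_mem_nhdsWithin]
    with s h1 h2 hs
  have hspos : (0:ℝ) < s := hs
  have hsne : s ≠ 0 := ne_of_gt hspos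
  have hns : ‖s‖ = s := by rw [Real.norm_eq_abs, abs_of_pos hspos]
  have hRb : ‖R s‖ ≤ |C₁| * s ^ 2 := by
    calc ‖R s‖ ≤ C₁ * ‖s ^ 2‖ := h1
      _ ≤ |C₁| * s ^ 2 := by
          rw [Real.norm_eq_abs, abs_of_pos (by positivity : (0:ℝ) < s ^ 2)]
          exact mul_le_mul_of_nonneg_right (le_abs_self _) (by positivity)
  have hrb : ‖(R s).2.2‖ ≤ |C₂| * s ^ 3 := by
    calc ‖(R s).2.2‖ ≤ C₂ * ‖s ^ 3‖ := h2
      _ ≤ |C₂| * s ^ 3 := by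
          rw [Real.norm_eq_abs, abs_of_pos (by positivity : (0:ℝ) < s ^ 3)]
          exact mul_le_mul_of_nonneg_right (le_abs_self _) (by positivity)
  have hT : heisDilation n s⁻¹ (φ (γ s)) - g
      = ((s⁻¹ • (R s).1 : Fin n → ℝ), (s⁻¹ • (R s).2.1 : Fin n → ℝ),
          s⁻¹ ^ 2 * (R s).2.2) := by
    have hc1 : s⁻¹ • (φ (γ s)).1 - g.1 = s⁻¹ • ((φ (γ s)).1 - s • g.1) := by
      rw [smul_sub, smul_smul, inv_mul_cancel₀ hsne, one_smul]
    have hc2 : s⁻¹ • (φ (γ s)).2.1 - g.2.1 = s⁻¹ • ((φ (γ s)).2.1 - s • g.2.1) := by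
      rw [smul_sub, smul_smul, inv_mul_cancel₀ hsne, one_smul]
    have hc3 : s⁻¹ ^ 2 * (φ (γ s)).2.2 - g.2.2
        = s⁻¹ ^ 2 * ((φ (γ s)).2.2 - s ^ 2 * g.2.2) := by
      rw [mul_sub]
      congr 1
      rw [← mul_assoc, ← mul_pow, inv_mul_cancel₀ hsne, one_pow, one_mul]
    have hRs : R s = ((φ (γ s)).1 - s • g.1, (φ (γ s)).2.1 - s • g.2.1,
        (φ (γ s)).2.2 - s ^ 2 * g.2.2) := rfl
    rw [hRs]
    refine Prod.ext ?_ (Prod.ext ?_ ?_)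
    · exact hc1
    · exact hc2
    · exact hc3
  rw [hγdef] at hT
  rw [hT, hns]
  have b1 : ‖s⁻¹ • (R s).1‖ ≤ (|C₁| + |C₂|) * s := by
    calc ‖s⁻¹ • (R s).1‖ = s⁻¹ * ‖(R s).1‖ := by
          rw [norm_smul, Real.norm_eq_abs, abs_of_pos (inv_pos.mpr hspos)]
      _ ≤ s⁻¹ * (|C₁| * s ^ 2) :=
          mul_le_mul_of_nonneg_left ((norm_fst_le _).trans hRb) (inv_pos.mpr hspos).le
      _ = |C₁| * s := by field_simp
      _ ≤ (|C₁| + |C₂|) * s :=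
          mul_le_mul_of_nonneg_right (by linarith [abs_nonneg C₂]) hspos.le
  have b2 : ‖s⁻¹ • (R s).2.1‖ ≤ (|C₁| + |C₂|) * s := by
    calc ‖s⁻¹ • (R s).2.1‖ = s⁻¹ * ‖(R s).2.1‖ := by
          rw [norm_smul, Real.norm_eq_abs, abs_of_pos (inv_pos.mpr hspos)]
      _ ≤ s⁻¹ * (|C₁| * s ^ 2) :=
          mul_le_mul_of_nonneg_left ((norm_fst_le _).trans (norm_snd_le (R s)) |>.trans hRb)
            (inv_pos.mpr hspos).le
      _ = |C₁| * s := by field_simp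
      _ ≤ (|C₁| + |C₂|) * s :=
          mul_le_mul_of_nonneg_right (by linarith [abs_nonneg C₂]) hspos.le
  have b3 : ‖s⁻¹ ^ 2 * (R s).2.2‖ ≤ (|C₁| + |C₂|) * s := by
    calc ‖s⁻¹ ^ 2 * (R s).2.2‖ = s⁻¹ ^ 2 * ‖(R s).2.2‖ := by
          rw [norm_mul, Real.norm_eq_abs, abs_of_pos (by positivity : (0:ℝ) < s⁻¹ ^ 2)]
      _ ≤ s⁻¹ ^ 2 * (|C₂| * s ^ 3) :=
          mul_le_mul_of_nonneg_left hrb (by positivity)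
      _ = |C₂| * s := by field_simp
      _ ≤ (|C₁| + |C₂|) * s :=
          mul_le_mul_of_nonneg_right (by linarith [abs_nonneg C₁]) hspos.le
  calc ‖(((s⁻¹ • (R s).1 : Fin n → ℝ), (s⁻¹ • (R s).2.1 : Fin n → ℝ),
        s⁻¹ ^ 2 * (R s).2.2) : HeisPt n)‖
      = max ‖s⁻¹ • (R s).1‖ (max ‖s⁻¹ • (R s).2.1‖ ‖s⁻¹ ^ 2 * (R s).2.2‖) := by
        rw [Prod.norm_def, Prod.norm_def]
    _ ≤ (|C₁| + |C₂|) * s := max_le b1 (max_le b2 b3)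
end

section
/- Let H be a complex Hilbert space and let D be a bounded self-adjoint operator on H such that 0 is not an accumulation point of the spectrum of D, i.e. there exists δ > 0 with spectrum(D) ∩ (−δ, δ) ⊆ {0}. For t > 0 let u_t = (tD + i)(tD − i)^{-1} (the operator tD − i is invertible since tD is self-adjoint). Then u_t converges in operator norm, as t → ∞, to 1 − 2P, where P is the orthogonal projection of H onto the kernel of D. -/
/-!
For self-adjoint `D` the continuous functional calculus gives `u_t = f_t(D)` with
`f_t(z) = (tz + i)/(tz - i)`. Since `0` is isolated in `σ(D)`, the indicator `χ` of `{0}` is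
continuous on `σ(D)`, and `χ(D)` is a self-adjoint idempotent with range `ker D`, i.e. `χ(D) = P`;
so `1 - 2P = g(D)` with `g = 1 - 2χ`. On `σ(D) ⊆ {0} ∪ {|x| ≥ δ}` we have `f_t(0) = -1 = g(0)` and
`|f_t(x) - 1| = 2/|tx - i| ≤ 2/(tδ)` otherwise, so `‖u_t - (1 - 2P)‖ ≤ 2/(tδ)` because the
functional calculus is isometric.
-/

open Filter Topology

lemma not_accPt_zero_of_gap {s : Set ℂ} {δ : ℝ} (hδ : 0 < δ)
    (hs : ∀ z ∈ s, ‖z‖ < δ → z = 0) : ¬AccPt 0 (𝓟 s) := by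
  rw [accPt_iff_nhds]
  push Not
  exact ⟨Metric.ball 0 δ, Metric.ball_mem_nhds 0 hδ, fun z ⟨hzδ, hz⟩ ↦ hs z hz (by simpa using hzδ)⟩

lemma ContinuousOn.of_compl_singleton_of_not_accPt {X Y : Type*} [TopologicalSpace X] [T1Space X]
    [TopologicalSpace Y] {f : X → Y} {s : Set X} {x : X} (hf : ContinuousOn f {x}ᶜ)
    (hx : ¬AccPt x (𝓟 s)) : ContinuousOn f s := by
  intro y hy
  rcases eq_or_ne y x with rfl | hyx
  · exact continuousWithinAt_of_not_accPt hx
  · exact (hf.continuousAt (isOpen_compl_singleton.mem_nhds hyx)).continuousWithinAt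

lemma continuousOn_indicator_zero {s : Set ℂ} (hs : ¬AccPt 0 (𝓟 s)) :
    ContinuousOn (({0} : Set ℂ).indicator (1 : ℂ → ℂ)) s :=
  (continuousOn_const.congr fun _ hz ↦ Set.indicator_of_notMem hz _).of_compl_singleton_of_not_accPt
    hs

lemma ofReal_mul_sub_I_ne_zero {z : ℂ} (hz : z.im = 0) (t : ℝ) : (t : ℂ) * z - Complex.I ≠ 0 := by
  intro h
  simpa [hz] using congrArg Complex.im h

lemma norm_cayley_sub_one_le {t δ : ℝ} (ht : 0 < t) (hδ : 0 < δ) {z : ℂ} (hz : z.im = 0)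
    (hzδ : δ ≤ ‖z‖) : ‖(t * z + Complex.I) / (t * z - Complex.I) - 1‖ ≤ 2 / (t * δ) := by
  have hne := ofReal_mul_sub_I_ne_zero hz t
  have hden : t * δ ≤ ‖(t : ℂ) * z - Complex.I‖ :=
    calc t * δ ≤ t * ‖z‖ := by gcongr
      _ = |((t : ℂ) * z - Complex.I).re| := by
        simp [← Complex.abs_re_eq_norm.mpr hz, hz, abs_mul, abs_of_pos ht]
      _ ≤ _ := Complex.abs_re_le_norm _
  calc ‖(t * z + Complex.I) / (t * z - Complex.I) - 1‖
      = 2 / ‖(t : ℂ) * z - Complex.I‖ := by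
        rw [div_sub_one hne, add_sub_sub_cancel, ← two_mul, norm_div]; simp
    _ ≤ 2 / (t * δ) := by gcongr

section

variable {A : Type*} [CStarAlgebra A]

lemma cfc_const_mul_add_const (a : A) [IsStarNormal a] (b c : ℂ) :
    cfc (fun z ↦ b * z + c) a = b • a + c • 1 := by
  rw [cfc_add .., cfc_const_mul .., cfc_id' .., cfc_const c a, Algebra.algebraMap_eq_smul_one]

lemma cfc_const_mul_sub_const (a : A) [IsStarNormal a] (b c : ℂ) :
    cfc (fun z ↦ b * z - c) a = b • a - c • 1 := by
  rw [cfc_sub .., cfc_const_mul .., cfc_id' .., cfc_const c a, Algebra.algebraMap_eq_smul_one]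

namespace IsSelfAdjoint

variable {a : A} (ha : IsSelfAdjoint a)
include ha

lemma isUnit_real_smul_sub_I (t : ℝ) : IsUnit ((t : ℂ) • a - Complex.I • 1) := by
  have := ha.isStarNormal
  rw [← cfc_const_mul_sub_const]
  exact (isUnit_cfc_iff _ a).mpr fun z hz ↦
    ofReal_mul_sub_I_ne_zero (ha.im_eq_zero_of_mem_spectrum hz) t

lemma cayley_eq_cfc (t : ℝ) :
    ((t : ℂ) • a + Complex.I • 1) * Ring.inverse ((t : ℂ) • a - Complex.I • 1) =
      cfc (fun z : ℂ ↦ (t * z + Complex.I) / (t * z - Complex.I)) a := by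
  have := ha.isStarNormal
  rw [cfc_map_div _ _ a fun z hz ↦ ofReal_mul_sub_I_ne_zero (ha.im_eq_zero_of_mem_spectrum hz) t,
    cfc_const_mul_add_const, cfc_const_mul_sub_const]

theorem tendsto_cayley {δ : ℝ} (hδ : 0 < δ) (hgap : ∀ z ∈ spectrum ℂ a, ‖z‖ < δ → z = 0) :
    Tendsto
      (fun t : ℝ ↦ ((t : ℂ) • a + Complex.I • 1) * Ring.inverse ((t : ℂ) • a - Complex.I • 1))
      atTop (𝓝 (1 - 2 • cfc (({0} : Set ℂ).indicator 1) a)) := by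
  have := ha.isStarNormal
  have hχ := continuousOn_indicator_zero (not_accPt_zero_of_gap hδ hgap)
  have hL : 1 - 2 • cfc (({0} : Set ℂ).indicator 1) a =
      cfc (fun z ↦ 1 - 2 * ({0} : Set ℂ).indicator 1 z) a := by
    rw [cfc_sub .., cfc_const_mul .., cfc_const_one ℂ a, two_nsmul, two_smul]
  rw [hL, tendsto_iff_norm_sub_tendsto_zero]
  refine squeeze_zero' (.of_forall fun _ ↦ norm_nonneg _) ?_
    ((tendsto_const_nhds (x := (2 : ℝ))).div_atTop (tendsto_id.atTop_mul_const hδ))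
  filter_upwards [eventually_gt_atTop 0] with t ht
  have hden : ∀ z ∈ spectrum ℂ a, (t : ℂ) * z - Complex.I ≠ 0 :=
    fun z hz ↦ ofReal_mul_sub_I_ne_zero (ha.im_eq_zero_of_mem_spectrum hz) t
  rw [cayley_eq_cfc ha, ← cfc_sub ..]
  refine norm_cfc_le (by positivity) fun z hz ↦ ?_
  rcases eq_or_ne z 0 with rfl | hz0
  · norm_num; positivity
  · simpa [hz0] using norm_cayley_sub_one_le ht hδ (ha.im_eq_zero_of_mem_spectrum hz)
      (not_lt.1 (mt (hgap z hz) hz0))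

end IsSelfAdjoint

end

section

variable {H : Type*} [NormedAddCommGroup H] [InnerProductSpace ℂ H] [CompleteSpace H]

theorem cfc_indicator_zero_eq_starProjection_ker (T : H →L[ℂ] H) [IsStarNormal T]
    (h0 : ¬AccPt 0 (𝓟 (spectrum ℂ T))) :
    cfc (({0} : Set ℂ).indicator 1) T = (LinearMap.ker (T : H →ₗ[ℂ] H)).starProjection := by
  set Q := cfc (({0} : Set ℂ).indicator 1) T
  have hχ := continuousOn_indicator_zero h0
  have hinv : ContinuousOn (·⁻¹ : ℂ → ℂ) (spectrum ℂ T) :=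
    continuousOn_inv₀.of_compl_singleton_of_not_accPt h0
  have hQ : IsStarProjection Q := by
    refine ⟨?_, ?_⟩
    · rw [IsIdempotentElem, ← cfc_mul ..]
      exact cfc_congr fun z _ ↦ by by_cases hz : z = 0 <;> simp [hz]
    · rw [IsSelfAdjoint, ← cfc_star]
      exact cfc_congr fun z _ ↦ by by_cases hz : z = 0 <;> simp [hz]
  have hTQ : T * Q = 0 := by
    rw [← cfc_id' ℂ T, ← cfc_mul .., ← cfc_zero ℂ T]
    exact cfc_congr fun z _ ↦ by by_cases hz : z = 0 <;> simp [hz]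
  -- with the junk value `0⁻¹ = 0`, `χ z + z⁻¹ * z = 1` holds for every `z`
  have hQT : Q + cfc (·⁻¹ : ℂ → ℂ) T * T = 1 := by
    have h : cfc (fun z ↦ ({0} : Set ℂ).indicator 1 z + z⁻¹ * z) T = 1 := by
      rw [← cfc_one ℂ T]
      exact cfc_congr fun z _ ↦ by by_cases hz : z = 0 <;> simp [hz]
    rwa [cfc_add (a := T) _ (fun z ↦ z⁻¹ * z) hχ (hinv.mul continuousOn_id),
      cfc_mul _ (fun z ↦ z) T hinv continuousOn_id, cfc_id' ℂ T] at h
  have hrange : LinearMap.range (Q : H →ₗ[ℂ] H) = LinearMap.ker (T : H →ₗ[ℂ] H) := by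
    refine le_antisymm ?_ fun y hy ↦ ⟨y, ?_⟩
    · rintro _ ⟨x, rfl⟩
      exact congr($hTQ x)
    · simpa [show T y = 0 from hy] using congr($hQT y)
  obtain ⟨_, hQ_eq⟩ := isStarProjection_iff_eq_starProjection_range.mp hQ
  rw [hQ_eq]
  congr

end

/-- Let `D` be a bounded self-adjoint operator on a complex Hilbert space whose spectrum
does not accumulate at `0`. Then `tD − i` is invertible for all `t`, and
`u_t = (tD + i)(tD − i)⁻¹` converges in operator norm, as `t → ∞`, to `1 − 2P`, where
`P` is the orthogonal projection onto the kernel of `D`. -/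
theorem cayley_homotopy_limit
    {H : Type*} [NormedAddCommGroup H] [InnerProductSpace ℂ H] [CompleteSpace H]
    (D : H →L[ℂ] H) (hD : IsSelfAdjoint D)
    (hgap : ∃ δ : ℝ, 0 < δ ∧ ∀ z ∈ spectrum ℂ D, ‖z‖ < δ → z = 0) :
    (∀ t : ℝ, IsUnit ((t : ℂ) • D - Complex.I • (1 : H →L[ℂ] H))) ∧
    Tendsto
      (fun t : ℝ => ((t : ℂ) • D + Complex.I • (1 : H →L[ℂ] H)) *
        Ring.inverse ((t : ℂ) • D - Complex.I • (1 : H →L[ℂ] H)))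
      atTop
      (nhds ((1 : H →L[ℂ] H) -
        2 • ((LinearMap.ker (D : H →ₗ[ℂ] H)).subtypeL.comp
          (Submodule.orthogonalProjection (LinearMap.ker (D : H →ₗ[ℂ] H)))))) := by
  obtain ⟨δ, hδ, hgap⟩ := hgap
  have := hD.isStarNormal
  have hP := cfc_indicator_zero_eq_starProjection_ker D (not_accPt_zero_of_gap hδ hgap)
  refine ⟨hD.isUnit_real_smul_sub_I, ?_⟩
  have hlim := hD.tendsto_cayley hδ hgap
  rwa [hP] at hlim
end

section
/- The functions x ↦ exp(−x²) and x ↦ x·exp(−x²) generate C₀(ℝ) as a C*-algebra: the smallest closed non-unital star-subalgebra of the algebra C₀(ℝ, ℂ) of continuous complex-valued functions on ℝ vanishing at infinity that contains these two functions is all of C₀(ℝ, ℂ). -/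
/-!
`h = f + i • g`, i.e. `h x = exp(-x²) (1 + i x)`, is injective and never zero (`Im h / Re h = x`),
so its extension by `0` at infinity is a homeomorphism of the one-point compactification of `ℝ`
onto a compact set `K ∋ 0` in `ℂ`. Precomposition with `h` is then a surjective, continuous
`⋆`-homomorphism `C(K, ℂ)₀ → C₀(ℝ, ℂ)` sending the identity of `K` to `h`, and by the non-unital
Stone–Weierstrass theorem the identity generates a dense `⋆`-subalgebra of `C(K, ℂ)₀`.
-/

open scoped ZeroAtInfty ContinuousMapZero
open Filter Topology

namespace ZeroAtInftyContinuousMap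

section OnePoint

variable {X E : Type*} [TopologicalSpace X] [T2Space X] [TopologicalSpace E] [Zero E]

def toOnePoint (u : C₀(X, E)) : C(OnePoint X, E) :=
  OnePoint.continuousMapMk u 0 (coclosedCompact_eq_cocompact (X := X) ▸ zero_at_infty u)

@[simp]
lemma toOnePoint_coe (u : C₀(X, E)) (x : X) : u.toOnePoint x = u x := rfl

@[simp]
lemma toOnePoint_infty (u : C₀(X, E)) : u.toOnePoint OnePoint.infty = 0 := rfl

lemma range_subset_range_toOnePoint (u : C₀(X, E)) : Set.range u ⊆ Set.range u.toOnePoint := by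
  rintro _ ⟨x, rfl⟩
  exact ⟨x, rfl⟩

instance (u : C₀(X, E)) : Fact ((0 : E) ∈ Set.range u.toOnePoint) :=
  ⟨⟨OnePoint.infty, rfl⟩⟩

instance (u : C₀(X, E)) : CompactSpace (Set.range u.toOnePoint) :=
  isCompact_iff_compactSpace.mp (isCompact_range u.toOnePoint.continuous)

lemma injective_toOnePoint {u : C₀(X, E)} (hinj : Function.Injective u) (hne : ∀ x, u x ≠ 0) :
    Function.Injective u.toOnePoint := by
  rintro (_ | x) (_ | y) hxy
  · rfl
  · exact absurd hxy.symm (hne y)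
  · exact absurd hxy (hne x)
  · exact congrArg _ (hinj hxy)

end OnePoint

variable {X 𝕜 : Type*} [TopologicalSpace X] [RCLike 𝕜]

def compCodRestrict (h : C₀(X, 𝕜)) (s : Set 𝕜) [Fact (0 ∈ s)] (hs : Set.range h ⊆ s) :
    C(s, 𝕜)₀ →⋆ₙₐ[𝕜] C₀(X, 𝕜) where
  toFun p :=
    { toFun := fun x ↦ p ⟨h x, hs ⟨x, rfl⟩⟩
      continuous_toFun := by fun_prop
      zero_at_infty' := by
        have : Tendsto (fun x ↦ (⟨h x, hs ⟨x, rfl⟩⟩ : s)) (cocompact X) (𝓝 0) :=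
          tendsto_subtype_rng.mpr (zero_at_infty h)
        exact ((map_continuous p).tendsto' 0 0 (map_zero p)).comp this }
  map_add' _ _ := rfl
  map_zero' := rfl
  map_mul' _ _ := rfl
  map_smul' _ _ := rfl
  map_star' _ := rfl

section compCodRestrict

variable (h : C₀(X, 𝕜)) (s : Set 𝕜) [Fact (0 ∈ s)] (hs : Set.range h ⊆ s)

@[simp]
lemma compCodRestrict_id : compCodRestrict h s hs (ContinuousMapZero.id s) = h := rfl

lemma norm_compCodRestrict_le [CompactSpace s] (p : C(s, 𝕜)₀) :
    ‖compCodRestrict h s hs p‖ ≤ ‖p‖ := by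
  rw [← norm_toBCF_eq_norm, BoundedContinuousFunction.norm_le (norm_nonneg _)]
  exact fun x ↦ (p : C(s, 𝕜)).norm_coe_le_norm _

lemma continuous_compCodRestrict [CompactSpace s] : Continuous (compCodRestrict h s hs) :=
  AddMonoidHomClass.continuous_of_bound _ 1 fun p ↦ by
    simpa using norm_compCodRestrict_le h s hs p

end compCodRestrict

lemma surjective_compCodRestrict [T2Space X] {h : C₀(X, 𝕜)} (hinj : Function.Injective h)
    (hne : ∀ x, h x ≠ 0) :
    Function.Surjective
      (compCodRestrict h (Set.range h.toOnePoint) (range_subset_range_toOnePoint h)) := by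
  intro u
  let e := (h.toOnePoint.continuous.isClosedEmbedding
    (injective_toOnePoint hinj hne)).isEmbedding.toHomeomorph
  have he (z : OnePoint X) : e.symm ⟨h.toOnePoint z, z, rfl⟩ = z :=
    IsEmbedding.toHomeomorph_symm_apply _ z
  refine ⟨⟨u.toOnePoint.comp e.symm, ?_⟩, ext fun x ↦ ?_⟩
  · change u.toOnePoint (e.symm ⟨h.toOnePoint OnePoint.infty, _⟩) = 0
    rw [he, toOnePoint_infty]
  · change u.toOnePoint (e.symm ⟨h.toOnePoint x, _⟩) = u x
    rw [he, toOnePoint_coe]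

theorem topologicalClosure_adjoin_singleton_eq_top {h : C₀(X, 𝕜)}
    (hinj : Function.Injective h) (hne : ∀ x, h x ≠ 0) :
    (NonUnitalStarAlgebra.adjoin 𝕜 {h}).topologicalClosure = ⊤ := by
  have : T2Space X := .of_injective_continuous hinj h.continuous
  let Φ := compCodRestrict h _ (range_subset_range_toOnePoint h)
  have hmap : (NonUnitalStarAlgebra.adjoin 𝕜 {ContinuousMapZero.id _}).map Φ =
      NonUnitalStarAlgebra.adjoin 𝕜 {h} := by
    rw [NonUnitalStarAlgHom.map_adjoin_singleton, compCodRestrict_id]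
  have hdense : Dense (NonUnitalStarAlgebra.adjoin 𝕜 {h} : Set C₀(X, 𝕜)) := by
    rw [← hmap, NonUnitalStarSubalgebra.coe_map]
    exact (surjective_compCodRestrict hinj hne).denseRange.dense_image
      (continuous_compCodRestrict ..) (ContinuousMapZero.adjoin_id_dense _)
  exact SetLike.ext' hdense.closure_eq

end ZeroAtInftyContinuousMap

/-- The functions `x ↦ exp(−x²)` and `x ↦ x·exp(−x²)` generate `C₀(ℝ, ℂ)` as a
C*-algebra: the closure of the non-unital star-subalgebra they generate is everything. -/
theorem gaussian_generates_C0
    (f g : C₀(ℝ, ℂ))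
    (hf : ∀ x : ℝ, f x = Complex.exp (-(x ^ 2 : ℝ)))
    (hg : ∀ x : ℝ, g x = (x : ℂ) * Complex.exp (-(x ^ 2 : ℝ))) :
    (NonUnitalStarAlgebra.adjoin ℂ {f, g}).topologicalClosure = ⊤ := by
  set h : C₀(ℝ, ℂ) := f + Complex.I • g
  have hval (x : ℝ) : h x = Real.exp (-x ^ 2) * (1 + x * Complex.I) := by
    simp only [h, ZeroAtInftyContinuousMap.add_apply, ZeroAtInftyContinuousMap.smul_apply, hf, hg,
      smul_eq_mul, Complex.ofReal_exp, Complex.ofReal_neg, Complex.ofReal_pow]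
    ring
  have hre (x : ℝ) : 0 < (h x).re := by
    rw [hval, Complex.re_ofReal_mul]
    norm_num [Real.exp_pos]
  have him (x : ℝ) : (h x).im = x * (h x).re := by
    rw [hval, Complex.re_ofReal_mul, Complex.im_ofReal_mul]
    norm_num
    ring
  have hinj : Function.Injective h := fun x y hxy ↦ by
    have := him x
    rw [hxy, him y] at this
    exact (mul_right_cancel₀ (hre y).ne' this).symm
  have hne (x : ℝ) : h x ≠ 0 := Complex.ne_zero_of_re_pos (hre x)
  have hmem : h ∈ NonUnitalStarAlgebra.adjoin ℂ {f, g} :=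
    add_mem (NonUnitalStarAlgebra.subset_adjoin ℂ _ (by simp))
      (SMulMemClass.smul_mem _ (NonUnitalStarAlgebra.subset_adjoin ℂ _ (by simp)))
  have hle := NonUnitalStarAlgebra.adjoin_le (Set.singleton_subset_iff.mpr hmem)
  have hdense := NonUnitalStarAlgebra.eq_top_iff.mp
    (ZeroAtInftyContinuousMap.topologicalClosure_adjoin_singleton_eq_top hinj hne)
  exact NonUnitalStarAlgebra.eq_top_iff.mpr fun u ↦
    NonUnitalStarSubalgebra.topologicalClosure_mono hle (hdense u)
end
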